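/- arXiv:2210.04157 — 6 statements merged into one kernel-verified Lean document; each statement's English description precedes it below -/
import Mathlib

section
/- Let Z be a countable set, let D be a set of probability distributions on Z, and define the coverability coefficient C_cov(D) = inf over probability distributions μ on Z of sup_{d ∈ D} sup_{z ∈ Z} d(z)/μ(z). Then C_cov(D) equals the cumulative reachability sum_{z ∈ Z} sup_{d ∈ D} d(z) (both possibly infinite). -/
open scoped ENNReal

/-!
Both sides only see the pointwise envelope `g z = ⨆ d ∈ D, d z`, since the ratio `d z / μ z` is
monotone in `d z`. If `g / μ ≤ K` pointwise then summing `g ≤ K μ` gives `∑ g ≤ K`, and the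
normalised envelope `μ = g / ∑ g` attains this bound.
-/

namespace ENNReal

variable {Z : Type*}

lemma biSup_iSup_div_eq_iSup_biSup_div {D : Set (Z → ℝ≥0∞)} (μ : Z → ℝ≥0∞) :
    ⨆ d ∈ D, ⨆ z, d z / μ z = ⨆ z, (⨆ d ∈ D, d z) / μ z := by
  simp only [ENNReal.iSup_div, @iSup_comm _ Z]

lemma tsum_le_iSup_div {g μ : Z → ℝ≥0∞} (hμ : ∑' z, μ z = 1) :
    ∑' z, g z ≤ ⨆ z, g z / μ z := by
  set K := ⨆ z, g z / μ z
  rcases eq_or_ne K ∞ with hK | hK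
  · exact hK ▸ le_top
  have hμ_ne_top (z : Z) : μ z ≠ ∞ :=
    ne_top_of_le_ne_top one_ne_top (hμ ▸ ENNReal.le_tsum z)
  have hg_le (z : Z) : g z ≤ K * μ z :=
    (ENNReal.div_le_iff_le_mul (Or.inr hK) (Or.inl (hμ_ne_top z))).1
      (le_iSup (fun z => g z / μ z) z)
  calc ∑' z, g z ≤ ∑' z, K * μ z := ENNReal.tsum_le_tsum hg_le
    _ = K := by rw [ENNReal.tsum_mul_left, hμ, mul_one]

lemma iSup_div_div_tsum_le (g : Z → ℝ≥0∞) (h0 : ∑' z, g z ≠ 0) (htop : ∑' z, g z ≠ ∞) :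
    ⨆ z, g z / (g z / ∑' z, g z) ≤ ∑' z, g z :=
  iSup_le fun _ => (ENNReal.div_le_iff_le_mul (Or.inr htop) (Or.inr h0)).2
    (ENNReal.mul_div_cancel h0 htop).ge

lemma tsum_div_tsum_self (g : Z → ℝ≥0∞) (h0 : ∑' z, g z ≠ 0) (htop : ∑' z, g z ≠ ∞) :
    ∑' z, g z / ∑' z, g z = 1 := by
  simp only [div_eq_mul_inv, ENNReal.tsum_mul_right]
  exact ENNReal.mul_inv_cancel h0 htop

theorem iInf_iSup_div_eq_tsum (g : Z → ℝ≥0∞) (h0 : ∑' z, g z ≠ 0) :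
    ⨅ μ : {μ : Z → ℝ≥0∞ // ∑' z, μ z = 1}, ⨆ z, g z / μ.1 z = ∑' z, g z := by
  refine le_antisymm ?_ (le_iInf fun μ => tsum_le_iSup_div μ.2)
  rcases eq_or_ne (∑' z, g z) ∞ with htop | htop
  · exact htop ▸ le_top
  exact iInf_le_of_le ⟨_, tsum_div_tsum_self g h0 htop⟩ (iSup_div_div_tsum_le g h0 htop)

end ENNReal

theorem coverability_eq_cumulative_reachability_general
    {Z : Type*}
    (D : Set (Z → ℝ≥0∞)) (hD : D.Nonempty)
    (hdist : ∀ d ∈ D, ∑' z, d z = 1) :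
    (⨅ μ : {μ : Z → ℝ≥0∞ // ∑' z, μ z = 1},
        ⨆ d ∈ D, ⨆ z : Z, d z / μ.1 z)
      = ∑' z : Z, ⨆ d ∈ D, d z := by
  obtain ⟨d₀, hd₀⟩ := hD
  have h_one_le : 1 ≤ ∑' z, ⨆ d ∈ D, d z :=
    hdist d₀ hd₀ ▸ ENNReal.tsum_le_tsum fun z => le_biSup (fun d => d z) hd₀
  simp only [ENNReal.biSup_iSup_div_eq_iSup_biSup_div]
  exact ENNReal.iInf_iSup_div_eq_tsum _ (one_pos.trans_le h_one_le).ne'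

/-- Coverability coefficient equals cumulative reachability. -/
theorem coverability_eq_cumulative_reachability
    {Z : Type*} [Countable Z]
    (D : Set (Z → ℝ≥0∞)) (hD : D.Nonempty)
    (hdist : ∀ d ∈ D, ∑' z, d z = 1) :
    (⨅ μ : {μ : Z → ℝ≥0∞ // ∑' z, μ z = 1},
        ⨆ d ∈ D, ⨆ z : Z, d z / μ.1 z)
      = ∑' z : Z, ⨆ d ∈ D, d z :=
  coverability_eq_cumulative_reachability_general D hD hdist
end

section
/- (Per-state-action elliptic potential lemma.) Let d^(1), ..., d^(T) be probability distributions over a set Z, and let μ be a probability distribution on Z such that d^(t)(z) ≤ C·μ(z) for all z ∈ Z and t ∈ [T], where C > 0. Then for every z ∈ Z, sum_{t=1}^T d^(t)(z) / (sum_{i<t} d^(i)(z) + C·μ(z)) ≤ 2·log(T + 1). -/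
/-!
Put `S k = ∑_{i<k} a i + M`. Since `0 ≤ a k ≤ M ≤ S k`, the ratio `y = a k / S k` lies in
`[0, 1]`, where `y ≤ 2 log (1 + y)`; so each term is at most `2 (log S (k+1) - log S k)`.
The sum telescopes to `2 log (S n / M)`, and `S n ≤ (n + 1) M`.
-/

open Real Finset

lemma div_le_two_mul_log_add_sub_log {x s : ℝ} (hx : 0 ≤ x) (hxs : x ≤ s) :
    x / s ≤ 2 * (log (s + x) - log s) := by
  rcases (hx.trans hxs).eq_or_lt with rfl | hs
  · simp [le_antisymm hxs hx]
  have hy0 : 0 ≤ x / s := div_nonneg hx hs.le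
  have hy1 : x / s ≤ 1 := (div_le_one hs).mpr hxs
  have hlog : log (s + x) - log s = log (1 + x / s) := by
    rw [← log_div (by positivity) hs.ne', add_div, div_self hs.ne']
  have hbound : 2 * (x / s) / (x / s + 2) ≤ log (1 + x / s) := le_log_one_add_of_nonneg hy0
  rw [div_le_iff₀ (by positivity)] at hbound
  rw [hlog]
  nlinarith

lemma log_sub_log_le_log_of_le_mul {x M c : ℝ} (hM : 0 ≤ M) (hc : 1 ≤ c)
    (hMx : M ≤ x) (hxc : x ≤ c * M) : log x - log M ≤ log c := by
  rcases hM.eq_or_lt with rfl | hM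
  · simp [le_antisymm (by simpa using hxc) hMx, log_nonneg hc]
  have hx : 0 < x := hM.trans_le hMx
  rw [sub_le_iff_le_add, ← log_mul (by positivity) hM.ne']
  exact log_le_log hx hxc

theorem sum_div_sum_range_add_le_two_mul_log {a : ℕ → ℝ} {M : ℝ} {n : ℕ}
    (ha0 : ∀ i < n, 0 ≤ a i) (haM : ∀ i < n, a i ≤ M) :
    ∑ k ∈ range n, a k / (∑ i ∈ range k, a i + M) ≤ 2 * log (n + 1) := by
  rcases n.eq_zero_or_pos with rfl | hn
  · simp
  have hM : 0 ≤ M := (ha0 0 hn).trans (haM 0 hn)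
  set S : ℕ → ℝ := fun k => ∑ i ∈ range k, a i + M with hS
  have hMS : ∀ k ≤ n, M ≤ S k := fun k hk =>
    le_add_of_nonneg_left (sum_nonneg fun i hi => ha0 i ((mem_range.mp hi).trans_le hk))
  have hterm : ∀ k ∈ range n, a k / S k ≤ 2 * (log (S (k + 1)) - log (S k)) := by
    intro k hk
    have hk := mem_range.mp hk
    simp only [hS, sum_range_succ, add_right_comm _ (a k)]
    exact div_le_two_mul_log_add_sub_log (ha0 k hk) ((haM k hk).trans (hMS k hk.le))
  have hSn : S n ≤ (n + 1) * M := by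
    have : ∑ i ∈ range n, a i ≤ n * M := by
      simpa using sum_le_card_nsmul (range n) a M fun i hi => haM i (mem_range.mp hi)
    simp only [hS]
    linarith
  calc ∑ k ∈ range n, a k / S k
      ≤ ∑ k ∈ range n, 2 * (log (S (k + 1)) - log (S k)) := sum_le_sum hterm
    _ = 2 * (log (S n) - log M) := by rw [← mul_sum, sum_range_sub (fun k => log (S k))]; simp [hS]
    _ ≤ 2 * log (n + 1) := by
      gcongr
      exact log_sub_log_le_log_of_le_mul hM (by simp) (hMS n le_rfl) hSn

lemma Fin.sum_Iio_eq_sum_range {M : Type*} [AddCommMonoid M] {n : ℕ} (f : Fin n → M)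
    (g : ℕ → M) (hfg : ∀ i, f i = g i) (t : Fin n) :
    ∑ i ∈ Iio t, f i = ∑ i ∈ range t, g i := by
  rw [← Nat.Iio_eq_range, ← Fin.map_valEmbedding_Iio, sum_map]
  exact sum_congr rfl fun i _ => hfg i

theorem per_state_elliptic_potential_general
    {Z : Type*} {T : ℕ}
    (d : Fin T → Z → ℝ) (μ : Z → ℝ) (C : ℝ)
    (hd0 : ∀ t z, 0 ≤ d t z)
    (hcov : ∀ t z, d t z ≤ C * μ z) :
    ∀ z : Z, ∑ t : Fin T, d t z / ((∑ i ∈ Finset.Iio t, d i z) + C * μ z)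
      ≤ 2 * Real.log (T + 1) := by
  intro z
  let a : ℕ → ℝ := fun n => if h : n < T then d ⟨n, h⟩ z else 0
  have ha : ∀ t : Fin T, d t z = a t := fun t => by simp [a]
  calc ∑ t : Fin T, d t z / ((∑ i ∈ Iio t, d i z) + C * μ z)
      = ∑ k ∈ range T, a k / (∑ i ∈ range k, a i + C * μ z) := by
        rw [← Fin.sum_univ_eq_sum_range (fun k => a k / (∑ i ∈ range k, a i + C * μ z))]
        exact sum_congr rfl fun t _ => by rw [ha t, Fin.sum_Iio_eq_sum_range _ a ha]
    _ ≤ 2 * log (T + 1) := sum_div_sum_range_add_le_two_mul_log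
        (fun i hi => by simpa [a, hi] using hd0 ⟨i, hi⟩ z)
        (fun i hi => by simpa [a, hi] using hcov ⟨i, hi⟩ z)

/-- Per-state-action elliptic potential lemma. -/
theorem per_state_elliptic_potential
    {Z : Type*} {T : ℕ}
    (d : Fin T → Z → ℝ) (μ : Z → ℝ) (C : ℝ) (hC : 0 < C)
    (hd0 : ∀ t z, 0 ≤ d t z) (hμ0 : ∀ z, 0 ≤ μ z)
    (hcov : ∀ t z, d t z ≤ C * μ z) :
    ∀ z : Z, ∑ t : Fin T, d t z / ((∑ i ∈ Finset.Iio t, d i z) + C * μ z)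
      ≤ 2 * Real.log (T + 1) :=
  per_state_elliptic_potential_general d μ C hd0 hcov
end

section
/- (Coverability bounds the sequential extrapolation coefficient, abstract form.) Let Z be a countable set, Ψ a set of functions Z → [0,1], and D a set of probability distributions on Z with coverability coefficient C := inf_μ sup_{d ∈ D} ||d/μ||_∞ < ∞ attained by some μ*. Then for any sequences ψ^(1),...,ψ^(T) ∈ Ψ and d^(1),...,d^(T) ∈ D, sum_{t=1}^T (E_{d^(t)}[ψ^(t)])² / max(1, sum_{i<t} E_{d^(i)}[(ψ^(t))²]) ≤ K·C·log(T+1) + K·C for some universal constant K (e.g., K = 16). -/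
/-!
Write `d̄ₜ(z) = ∑_{i<t} dᵢ(z)` and `c(z) = C μ*(z) ≥ dₜ(z)`. Split `E_{dₜ}[ψₜ]` according to
whether `d̄ₜ(z) < c(z)`. Along each `z` this burn-in part has total mass at most `2 c(z)`, so it
contributes at most `2C` overall. Once `d̄ₜ(z) ≥ c(z)` we have `dₜ² / d̄ₜ ≤ 2 c dₜ / (d̄ₜ + c)`, and
Cauchy–Schwarz bounds the square of the rest by `E_{d̄ₜ}[ψₜ²] · 2 ∑_z c dₜ / (d̄ₜ + c)`. Since
`x ≤ 2 log (1 + x)` on `[0, 1]`, the sum over `t` of `dₜ / (d̄ₜ + c)` telescopes to at most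
`2 log (T + 1)`.
-/

open Finset

lemma div_le_two_mul_log_sub {a A c : ℝ} (ha : 0 ≤ a) (hac : a ≤ c) (hA : 0 ≤ A) (hc : 0 < c) :
    a / (A + c) ≤ 2 * (Real.log (A + a + c) - Real.log (A + c)) := by
  have hx : 0 < A + c := by linarith
  have hy : 0 < A + a + c := by linarith
  have hlog := Real.one_sub_inv_le_log_of_pos (div_pos hy hx)
  rw [Real.log_div hy.ne' hx.ne', inv_div, one_sub_div hy.ne'] at hlog
  calc a / (A + c) ≤ 2 * ((A + a + c - (A + c)) / (A + a + c)) := by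
        rw [mul_div_assoc', div_le_div_iff₀ hx hy]; nlinarith
    _ ≤ _ := by gcongr

theorem sum_div_partialSum_add_le_two_mul_log {a : ℕ → ℝ} {c : ℝ} (hc : 0 < c)
    (ha0 : ∀ i, 0 ≤ a i) (hac : ∀ i, a i ≤ c) (T : ℕ) :
    ∑ t ∈ range T, a t / (∑ i ∈ range t, a i + c) ≤ 2 * Real.log (T + 1) := by
  set L : ℕ → ℝ := fun n => Real.log (∑ i ∈ range n, a i + c)
  have hsumT : ∑ i ∈ range T, a i ≤ T * c := by
    simpa using sum_le_sum fun i (_ : i ∈ range T) => hac i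
  calc ∑ t ∈ range T, a t / (∑ i ∈ range t, a i + c)
      ≤ ∑ t ∈ range T, 2 * (L (t + 1) - L t) := sum_le_sum fun t _ => by
        simpa only [L, sum_range_succ] using
          div_le_two_mul_log_sub (ha0 t) (hac t) (sum_nonneg fun i _ => ha0 i) hc
    _ = 2 * (L T - Real.log c) := by rw [← mul_sum, sum_range_sub]; simp [L]
    _ ≤ 2 * (Real.log ((T + 1) * c) - Real.log c) := by
        gcongr
        exact Real.log_le_log (add_pos_of_nonneg_of_pos (sum_nonneg fun i _ => ha0 i) hc)
          (by linarith)
    _ = 2 * Real.log (T + 1) := by rw [Real.log_mul (by positivity) hc.ne']; ring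

theorem sum_ite_partialSum_lt_le {a : ℕ → ℝ} {c : ℝ} (ha0 : ∀ i, 0 ≤ a i)
    (hac : ∀ i, a i ≤ c) (T : ℕ) :
    ∑ t ∈ range T, (if ∑ i ∈ range t, a i < c then a t else 0) ≤ 2 * c := by
  induction T with
  | zero => simpa using (ha0 0).trans (hac 0)
  | succ n ih =>
    rw [sum_range_succ]
    split_ifs with h
    · have : ∑ t ∈ range n, (if ∑ i ∈ range t, a i < c then a t else 0) ≤ ∑ i ∈ range n, a i :=
        sum_le_sum fun t _ => by split_ifs <;> simp [ha0 t]
      linarith [hac n]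
    · simpa using ih

theorem sq_tsum_le_tsum_mul_tsum_of_sq_le_mul {ι : Type*} {r f g : ι → ℝ} (hr : ∀ i, 0 ≤ r i)
    (hf : ∀ i, 0 ≤ f i) (hg : ∀ i, 0 ≤ g i) (hfS : Summable f) (hgS : Summable g)
    (ht : ∀ i, r i ^ 2 ≤ f i * g i) : (∑' i, r i) ^ 2 ≤ (∑' i, f i) * ∑' i, g i := by
  have hfg : 0 ≤ (∑' i, f i) * ∑' i, g i := mul_nonneg (tsum_nonneg hf) (tsum_nonneg hg)
  have hle : ∑' i, r i ≤ √((∑' i, f i) * ∑' i, g i) := by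
    refine tsum_le_of_sum_le' (Real.sqrt_nonneg _) fun s => ?_
    refine (Real.le_sqrt (sum_nonneg fun i _ => hr i) hfg).2 ?_
    refine (sum_sq_le_sum_mul_sum_of_sq_le_mul s (fun i _ => hf i) (fun i _ => hg i)
      fun i _ => ht i).trans ?_
    exact mul_le_mul (hfS.sum_le_tsum s fun i _ => hf i) (hgS.sum_le_tsum s fun i _ => hg i)
      (sum_nonneg fun i _ => hg i) (tsum_nonneg hf)
  simpa [Real.sq_sqrt hfg] using pow_le_pow_left₀ (tsum_nonneg hr) hle 2

lemma sq_le_mul_two_mul_mul_div {d dbar c : ℝ} (hd : 0 ≤ d) (hdc : d ≤ c) (hc : c ≤ dbar) :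
    d ^ 2 ≤ dbar * (2 * (c * (d / (dbar + c)))) := by
  rcases hd.eq_or_lt with rfl | hd
  · simp
  have hpos : 0 < dbar + c := by linarith
  rw [show dbar * (2 * (c * (d / (dbar + c)))) = 2 * c * d * dbar / (dbar + c) by ring,
    le_div_iff₀ hpos]
  nlinarith [mul_le_mul_of_nonneg_right hdc (mul_nonneg hd.le (by linarith : 0 ≤ dbar)),
    mul_le_mul_of_nonneg_right hc (mul_nonneg hd.le (by linarith : 0 ≤ c)),
    mul_le_mul_of_nonneg_right hdc (mul_nonneg hd.le (by linarith : 0 ≤ c))]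

section Summability

variable {Z : Type*} {d e c : Z → ℝ}

lemma summable_mul_of_le_one (hdS : Summable d) (hd0 : ∀ z, 0 ≤ d z) {g : Z → ℝ}
    (hg0 : ∀ z, 0 ≤ g z) (hg1 : ∀ z, g z ≤ 1) : Summable fun z => d z * g z :=
  hdS.of_nonneg_of_le (fun z => mul_nonneg (hd0 z) (hg0 z))
    fun z => mul_le_of_le_one_right (hd0 z) (hg1 z)

lemma summable_mul_div_add (hdS : Summable d) (hd0 : ∀ z, 0 ≤ d z) (he0 : ∀ z, 0 ≤ e z)
    (hc0 : ∀ z, 0 ≤ c z) : Summable fun z => c z * (d z / (e z + c z)) := by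
  refine hdS.of_nonneg_of_le (fun z => ?_) fun z => ?_
  · have := hd0 z; have := he0 z; have := hc0 z; positivity
  · rw [mul_div_assoc']
    exact div_le_of_le_mul₀ (add_nonneg (he0 z) (hc0 z)) (hd0 z)
      (by nlinarith [mul_nonneg (hd0 z) (he0 z)])

lemma summable_ite_lt (hdS : Summable d) (hd0 : ∀ z, 0 ≤ d z) :
    Summable fun z => if e z < c z then d z else 0 :=
  hdS.of_nonneg_of_le (fun z => by split_ifs <;> simp [hd0 z])
    fun z => by split_ifs <;> simp [hd0 z]

end Summability

theorem sq_tsum_ite_le_tsum_mul_two_mul_tsum {Z : Type*} {d dbar ψ c : Z → ℝ}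
    (hd0 : ∀ z, 0 ≤ d z) (hdc : ∀ z, d z ≤ c z) (hdbar0 : ∀ z, 0 ≤ dbar z)
    (hψ : ∀ z, ψ z ∈ Set.Icc (0 : ℝ) 1) (hdS : Summable d) (hdbarS : Summable dbar) :
    (∑' z, if c z ≤ dbar z then d z * ψ z else 0) ^ 2
      ≤ (∑' z, dbar z * ψ z ^ 2) * (2 * ∑' z, c z * (d z / (dbar z + c z))) := by
  have hc0 z : 0 ≤ c z := (hd0 z).trans (hdc z)
  have hX0 z : 0 ≤ 2 * (c z * (d z / (dbar z + c z))) := by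
    have := hd0 z; have := hdbar0 z; have := hc0 z; positivity
  rw [← tsum_mul_left]
  refine sq_tsum_le_tsum_mul_tsum_of_sq_le_mul
    (fun z => by split_ifs <;> simp [mul_nonneg (hd0 z) (hψ z).1])
    (fun z => mul_nonneg (hdbar0 z) (sq_nonneg _)) hX0
    (summable_mul_of_le_one hdbarS hdbar0 (fun z => sq_nonneg _)
      fun z => pow_le_one₀ (hψ z).1 (hψ z).2)
    ((summable_mul_div_add hdS hd0 hdbar0 hc0).mul_left 2) fun z => ?_
  split_ifs with h
  · calc (d z * ψ z) ^ 2 = d z ^ 2 * ψ z ^ 2 := mul_pow _ _ _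
      _ ≤ dbar z * (2 * (c z * (d z / (dbar z + c z)))) * ψ z ^ 2 :=
          mul_le_mul_of_nonneg_right (sq_le_mul_two_mul_mul_div (hd0 z) (hdc z) h)
            (sq_nonneg _)
      _ = _ := by ring
  · simpa using mul_nonneg (mul_nonneg (hdbar0 z) (sq_nonneg (ψ z))) (hX0 z)

theorem sq_tsum_mul_div_max_le {Z : Type*} {d dbar ψ c : Z → ℝ} (hd0 : ∀ z, 0 ≤ d z)
    (hdc : ∀ z, d z ≤ c z) (hdbar0 : ∀ z, 0 ≤ dbar z) (hψ : ∀ z, ψ z ∈ Set.Icc (0 : ℝ) 1)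
    (hdS : Summable d) (hdbarS : Summable dbar) (hd1 : ∑' z, d z ≤ 1) :
    (∑' z, d z * ψ z) ^ 2 / max 1 (∑' z, dbar z * ψ z ^ 2)
      ≤ 4 * ∑' z, c z * (d z / (dbar z + c z))
        + 2 * ∑' z, (if dbar z < c z then d z else 0) := by
  have hc0 z : 0 ≤ c z := (hd0 z).trans (hdc z)
  have hψ0 z : 0 ≤ ψ z := (hψ z).1
  have hdψ z : d z * ψ z ≤ d z := mul_le_of_le_one_right (hd0 z) (hψ z).2
  have hmS : Summable fun z => if c z ≤ dbar z then d z * ψ z else 0 :=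
    hdS.of_nonneg_of_le (fun z => by split_ifs <;> simp [mul_nonneg (hd0 z) (hψ0 z)])
      fun z => by split_ifs <;> simp [hdψ z, hd0 z]
  have hbS : Summable fun z => if dbar z < c z then d z else 0 := summable_ite_lt hdS hd0
  set main := ∑' z, if c z ≤ dbar z then d z * ψ z else 0
  set b := ∑' z, if dbar z < c z then d z else 0
  set Q := ∑' z, dbar z * ψ z ^ 2
  set X := ∑' z, c z * (d z / (dbar z + c z))
  have hsplit : ∑' z, d z * ψ z ≤ main + b := by
    rw [← hmS.tsum_add hbS]
    refine (summable_mul_of_le_one hdS hd0 hψ0 fun z => (hψ z).2).tsum_le_tsum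
      (fun z => ?_) (hmS.add hbS)
    by_cases h : c z ≤ dbar z
    · simp [h, not_lt.2 h]
    · simp [h, lt_of_not_ge h, hdψ z]
  have hmain : main ^ 2 ≤ Q * (2 * X) :=
    sq_tsum_ite_le_tsum_mul_two_mul_tsum hd0 hdc hdbar0 hψ hdS hdbarS
  have hb0 : 0 ≤ b := tsum_nonneg fun z => by split_ifs <;> simp [hd0 z]
  have hb1 : b ≤ 1 :=
    (hbS.tsum_le_tsum (fun z => by split_ifs <;> simp [hd0 z]) hdS).trans hd1
  have hX0 : 0 ≤ X := tsum_nonneg fun z => by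
    have := hd0 z; have := hdbar0 z; have := hc0 z; positivity
  have hM : 1 ≤ max 1 Q := le_max_left _ _
  have hQM : Q ≤ max 1 Q := le_max_right _ _
  rw [div_le_iff₀ (by linarith)]
  calc (∑' z, d z * ψ z) ^ 2 ≤ (main + b) ^ 2 :=
        pow_le_pow_left₀ (tsum_nonneg fun z => mul_nonneg (hd0 z) (hψ0 z)) hsplit 2
    _ ≤ 2 * main ^ 2 + 2 * b ^ 2 := by nlinarith [sq_nonneg (main - b)]
    _ ≤ 4 * X * Q + 2 * b * max 1 Q := by nlinarith
    _ ≤ (4 * X + 2 * b) * max 1 Q := by nlinarith [mul_le_mul_of_nonneg_left hQM hX0]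

theorem sum_sq_tsum_div_max_le {Z : Type*} {c : Z → ℝ} (hcS : Summable c) {d ψ : ℕ → Z → ℝ}
    (hd0 : ∀ n z, 0 ≤ d n z) (hdc : ∀ n z, d n z ≤ c z) (hd1 : ∀ n, ∑' z, d n z ≤ 1)
    (hψ : ∀ n z, ψ n z ∈ Set.Icc (0 : ℝ) 1) (T : ℕ) :
    ∑ t ∈ range T, (∑' z, d t z * ψ t z) ^ 2
        / max 1 (∑ i ∈ range t, ∑' z, d i z * ψ t z ^ 2)
      ≤ 8 * (∑' z, c z) * Real.log (T + 1) + 4 * ∑' z, c z := by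
  have hc0 z : 0 ≤ c z := (hd0 0 z).trans (hdc 0 z)
  have hdS n : Summable (d n) := hcS.of_nonneg_of_le (hd0 n) (hdc n)
  have hdbar0 t z : 0 ≤ ∑ i ∈ range t, d i z := sum_nonneg fun i _ => hd0 i z
  have hXS t := summable_mul_div_add (hdS t) (hd0 t) (hdbar0 t) hc0
  have hbS t := summable_ite_lt (e := fun z => ∑ i ∈ range t, d i z) (c := c) (hdS t) (hd0 t)
  have hround t : (∑' z, d t z * ψ t z) ^ 2 / max 1 (∑ i ∈ range t, ∑' z, d i z * ψ t z ^ 2)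
      ≤ 4 * ∑' z, c z * (d t z / (∑ i ∈ range t, d i z + c z))
        + 2 * ∑' z, (if ∑ i ∈ range t, d i z < c z then d t z else 0) := by
    have hQ : ∑ i ∈ range t, ∑' z, d i z * ψ t z ^ 2
        = ∑' z, (∑ i ∈ range t, d i z) * ψ t z ^ 2 := by
      simp_rw [sum_mul]
      exact (Summable.tsum_finsetSum fun i _ => summable_mul_of_le_one (hdS i) (hd0 i)
        (fun z => sq_nonneg _) fun z => pow_le_one₀ (hψ t z).1 (hψ t z).2).symm
    rw [hQ]
    exact sq_tsum_mul_div_max_le (hd0 t) (hdc t) (hdbar0 t) (hψ t) (hdS t)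
      (summable_sum fun i _ => hdS i) (hd1 t)
  have hXsum : ∑ t ∈ range T, ∑' z, c z * (d t z / (∑ i ∈ range t, d i z + c z))
      ≤ 2 * Real.log (T + 1) * ∑' z, c z := by
    rw [← Summable.tsum_finsetSum fun t _ => hXS t, ← tsum_mul_left]
    refine (summable_sum fun t _ => hXS t).tsum_le_tsum (fun z => ?_) (hcS.mul_left _)
    rcases (hc0 z).eq_or_lt with hz | hz
    · simp [← hz]
    rw [← mul_sum, mul_comm _ (c z)]
    exact mul_le_mul_of_nonneg_left
      (sum_div_partialSum_add_le_two_mul_log hz (fun i => hd0 i z) (fun i => hdc i z) T) hz.le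
  have hbsum : ∑ t ∈ range T, ∑' z, (if ∑ i ∈ range t, d i z < c z then d t z else 0)
      ≤ 2 * ∑' z, c z := by
    rw [← Summable.tsum_finsetSum fun t _ => hbS t, ← tsum_mul_left]
    exact (summable_sum fun t _ => hbS t).tsum_le_tsum
      (fun z => sum_ite_partialSum_lt_le (fun i => hd0 i z) (fun i => hdc i z) T)
      (hcS.mul_left _)
  grw [sum_le_sum fun t _ => hround t, sum_add_distrib, ← mul_sum, ← mul_sum, hXsum, hbsum]
  linarith

lemma Function.extend_mem_of_forall {α β γ : Type*} {f : α → β} {g : α → γ} {e' : β → γ}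
    {s : Set γ} (hg : ∀ a, g a ∈ s) (he : ∀ b, e' b ∈ s) (b : β) :
    Function.extend f g e' b ∈ s := by
  classical
  rw [Function.extend_def]
  split_ifs
  exacts [hg _, he b]

lemma Fin.sum_range_val_eq_sum_Iio {M : Type*} [AddCommMonoid M] {T : ℕ} (t : Fin T) (g : ℕ → M) :
    ∑ n ∈ range t, g n = ∑ i ∈ Iio t, g i := by
  rw [← Nat.Iio_eq_range, ← Fin.map_valEmbedding_Iio, sum_map]
  rfl

theorem sec_le_coverability_general
    {Z : Type*} {T : ℕ}
    (Ψ : Set (Z → ℝ)) (hΨ : ∀ ψ ∈ Ψ, ∀ z, ψ z ∈ Set.Icc (0 : ℝ) 1)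
    (D : Set (Z → ℝ)) (hDd : ∀ d ∈ D, (∀ z, 0 ≤ d z) ∧ ∑' z, d z = 1)
    (C : ℝ) (hC : 0 < C)
    (μstar : Z → ℝ) (hμ0 : ∀ z, 0 ≤ μstar z) (hμsum : ∑' z, μstar z = 1)
    (hcov : ∀ d ∈ D, ∀ z, d z ≤ C * μstar z)
    (ψ : Fin T → Z → ℝ) (hψ : ∀ t, ψ t ∈ Ψ)
    (d : Fin T → Z → ℝ) (hd : ∀ t, d t ∈ D) :
    ∑ t : Fin T,
        (∑' z, d t z * ψ t z) ^ 2
          / max 1 (∑ i ∈ Finset.Iio t, ∑' z, d i z * (ψ t z) ^ 2)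
      ≤ 16 * C * Real.log (T + 1) + 16 * C := by
  have hμS : Summable μstar := by
    by_contra h
    simp [tsum_eq_zero_of_not_summable h] at hμsum
  set d' := Function.extend Fin.val d 0
  set ψ' := Function.extend Fin.val ψ 0
  have hd' : ∀ n, d' n ∈ {u : Z → ℝ | (∀ z, 0 ≤ u z ∧ u z ≤ C * μstar z) ∧ ∑' z, u z ≤ 1} :=
    Function.extend_mem_of_forall
      (fun t => ⟨fun z => ⟨(hDd _ (hd t)).1 z, hcov _ (hd t) z⟩, (hDd _ (hd t)).2.le⟩)
      fun _ => ⟨fun z => ⟨le_rfl, by simpa using mul_nonneg hC.le (hμ0 z)⟩, by simp⟩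
  have hψ' : ∀ n, ψ' n ∈ {u : Z → ℝ | ∀ z, u z ∈ Set.Icc (0 : ℝ) 1} :=
    Function.extend_mem_of_forall (fun t => hΨ _ (hψ t)) fun _ z => by simp
  have key := sum_sq_tsum_div_max_le (hμS.mul_left C) (fun n z => ((hd' n).1 z).1)
    (fun n z => ((hd' n).1 z).2) (fun n => (hd' n).2) hψ' T
  rw [tsum_mul_left, hμsum, mul_one] at key
  calc _ = ∑ t ∈ range T, (∑' z, d' t z * ψ' t z) ^ 2
        / max 1 (∑ i ∈ range t, ∑' z, d' i z * ψ' t z ^ 2) := by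
        rw [← Fin.sum_univ_eq_sum_range]
        simp [d', ψ', Fin.sum_range_val_eq_sum_Iio, Fin.val_injective.extend_apply]
    _ ≤ 8 * C * Real.log (T + 1) + 4 * C := key
    _ ≤ 16 * C * Real.log (T + 1) + 16 * C := by
        nlinarith [mul_nonneg hC.le (Real.log_nonneg (by linarith : (1 : ℝ) ≤ T + 1))]

/-- Coverability bounds the sequential extrapolation coefficient (abstract form),
with universal constant `K = 16`. -/
theorem sec_le_coverability
    {Z : Type*} [Countable Z] {T : ℕ}
    (Ψ : Set (Z → ℝ)) (hΨ : ∀ ψ ∈ Ψ, ∀ z, ψ z ∈ Set.Icc (0 : ℝ) 1)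
    (D : Set (Z → ℝ)) (hDd : ∀ d ∈ D, (∀ z, 0 ≤ d z) ∧ ∑' z, d z = 1)
    (C : ℝ) (hC : 0 < C)
    (μstar : Z → ℝ) (hμ0 : ∀ z, 0 ≤ μstar z) (hμsum : ∑' z, μstar z = 1)
    (hcov : ∀ d ∈ D, ∀ z, d z ≤ C * μstar z)
    (ψ : Fin T → Z → ℝ) (hψ : ∀ t, ψ t ∈ Ψ)
    (d : Fin T → Z → ℝ) (hd : ∀ t, d t ∈ D) :
    ∑ t : Fin T,
        (∑' z, d t z * ψ t z) ^ 2
          / max 1 (∑ i ∈ Finset.Iio t, ∑' z, d i z * (ψ t z) ^ 2)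
      ≤ 16 * C * Real.log (T + 1) + 16 * C :=
  sec_le_coverability_general Ψ hΨ D hDd C hC μstar hμ0 hμsum hcov ψ hψ d hd
end

section
/- (Squared Bellman–Eluder dimension is bounded by SEC.) Let Ψ be a set of functions Z → [0,1] and D a set of distributions on Z. Suppose d^(1),...,d^(n) ∈ D and ψ^(1),...,ψ^(n) ∈ Ψ satisfy: for each t ∈ [n] there is ε^(t) ≥ ε with |E_{d^(t)}[ψ^(t)]| > ε^(t) and sum_{i<t} E_{d^(i)}[(ψ^(t))²] ≤ (ε^(t))². Then n ≤ (1/ε²) · sum_{t=1}^n (E_{d^(t)}[ψ^(t)])² / max(1, sum_{i<t} E_{d^(i)}[(ψ^(t))²]). In particular n ≤ SEC(Ψ, D, n)/ε², where SEC(Ψ, D, n) is the supremum of the displayed sum over all length-n sequences. -/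
/-! Every term of the sum is at least `ε ^ 2`: since `ψ` takes values in `[0, 1]` and `d` is a
probability mass function, `ε' < E_d[ψ] ≤ 1`, so the past squared error is at most `ε' ^ 2 ≤ 1`,
the denominator `max 1 _` is `1`, and the term is `E_d[ψ] ^ 2 > ε' ^ 2 ≥ ε ^ 2`. -/

lemma tsum_mul_mem_Icc_zero_one {Z : Type*} {d f : Z → ℝ} (hd0 : ∀ z, 0 ≤ d z)
    (hd1 : ∑' z, d z = 1) (hf : ∀ z, f z ∈ Set.Icc (0 : ℝ) 1) :
    ∑' z, d z * f z ∈ Set.Icc (0 : ℝ) 1 := by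
  have hsum : Summable d := by
    by_contra h
    rw [tsum_eq_zero_of_not_summable h] at hd1
    exact zero_ne_one hd1
  have hnonneg : ∀ z, 0 ≤ d z * f z := fun z => mul_nonneg (hd0 z) (hf z).1
  have hle : ∀ z, d z * f z ≤ d z := fun z => mul_le_of_le_one_right (hd0 z) (hf z).2
  refine ⟨tsum_nonneg hnonneg, ?_⟩
  calc ∑' z, d z * f z ≤ ∑' z, d z :=
        (hsum.of_nonneg_of_le hnonneg hle).tsum_le_tsum hle hsum
    _ = 1 := hd1

lemma sq_le_sq_div_max_one {ε ε' E S : ℝ} (hε : 0 < ε) (hεε' : ε ≤ ε') (hE : |E| ≤ 1)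
    (hbig : ε' < |E|) (hS : S ≤ ε' ^ 2) : ε ^ 2 ≤ E ^ 2 / max 1 S := by
  have hε'1 : ε' ≤ 1 := (hbig.trans_le hE).le
  have hS1 : S ≤ 1 := hS.trans (pow_le_one₀ (hε.le.trans hεε') hε'1)
  rw [max_eq_left hS1, div_one, ← sq_abs E]
  exact pow_le_pow_left₀ hε.le (hεε'.trans hbig.le) 2

theorem sq_bedim_le_sec_general
    {Z : Type*} {n : ℕ}
    (Ψ : Set (Z → ℝ)) (hΨ : ∀ ψ ∈ Ψ, ∀ z, ψ z ∈ Set.Icc (0 : ℝ) 1)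
    (D : Set (Z → ℝ)) (hDd : ∀ d ∈ D, (∀ z, 0 ≤ d z) ∧ ∑' z, d z = 1)
    (ε : ℝ) (hε : 0 < ε)
    (ψ : Fin n → Z → ℝ) (hψ : ∀ t, ψ t ∈ Ψ)
    (d : Fin n → Z → ℝ) (hd : ∀ t, d t ∈ D)
    (ε' : Fin n → ℝ) (hε' : ∀ t, ε ≤ ε' t)
    (hbig : ∀ t, ε' t < |∑' z, d t z * ψ t z|)
    (hsmall : ∀ t, ∑ i ∈ Finset.Iio t, ∑' z, d i z * (ψ t z) ^ 2 ≤ (ε' t) ^ 2) :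
    (n : ℝ) ≤ (1 / ε ^ 2) *
      ∑ t : Fin n, (∑' z, d t z * ψ t z) ^ 2
        / max 1 (∑ i ∈ Finset.Iio t, ∑' z, d i z * (ψ t z) ^ 2) := by
  have hterm : ∀ t, ε ^ 2 ≤ (∑' z, d t z * ψ t z) ^ 2
      / max 1 (∑ i ∈ Finset.Iio t, ∑' z, d i z * (ψ t z) ^ 2) := fun t => by
    obtain ⟨hd0, hd1⟩ := hDd (d t) (hd t)
    have hE := tsum_mul_mem_Icc_zero_one hd0 hd1 (hΨ (ψ t) (hψ t))
    exact sq_le_sq_div_max_one hε (hε' t) ((abs_of_nonneg hE.1).trans_le hE.2)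
      (hbig t) (hsmall t)
  have hsum := Finset.card_nsmul_le_sum Finset.univ _ _ fun t _ => hterm t
  rw [Finset.card_univ, Fintype.card_fin, nsmul_eq_mul] at hsum
  rwa [one_div_mul_eq_div, le_div_iff₀ (by positivity)]

/-- Squared Bellman–Eluder dimension is bounded by the SEC. -/
theorem sq_bedim_le_sec
    {Z : Type*} [Countable Z] {n : ℕ}
    (Ψ : Set (Z → ℝ)) (hΨ : ∀ ψ ∈ Ψ, ∀ z, ψ z ∈ Set.Icc (0 : ℝ) 1)
    (D : Set (Z → ℝ)) (hDd : ∀ d ∈ D, (∀ z, 0 ≤ d z) ∧ ∑' z, d z = 1)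
    (ε : ℝ) (hε : 0 < ε) (hε1 : ε ≤ 1)
    (ψ : Fin n → Z → ℝ) (hψ : ∀ t, ψ t ∈ Ψ)
    (d : Fin n → Z → ℝ) (hd : ∀ t, d t ∈ D)
    (ε' : Fin n → ℝ) (hε' : ∀ t, ε ≤ ε' t)
    (hbig : ∀ t, ε' t < |∑' z, d t z * ψ t z|)
    (hsmall : ∀ t, ∑ i ∈ Finset.Iio t, ∑' z, d i z * (ψ t z) ^ 2 ≤ (ε' t) ^ 2) :
    (n : ℝ) ≤ (1 / ε ^ 2) *
      ∑ t : Fin n, (∑' z, d t z * ψ t z) ^ 2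
        / max 1 (∑ i ∈ Finset.Iio t, ∑' z, d i z * (ψ t z) ^ 2) :=
  sq_bedim_le_sec_general Ψ hΨ D hDd ε hε ψ hψ d hd ε' hε' hbig hsmall
end

section
/- (Reward-free test function overestimates regret.) Consider a finite-horizon MDP with horizon H, Bellman operator T_h (with reward) and zero-reward Bellman operator P_h given by (P_h g_{h+1})(x,a) = E_{x' ∼ P_h(·|x,a)}[max_{a'} g_{h+1}(x', a')]. Let f = (f_1,...,f_H) with f_{H+1} = 0, and define g = (g_1,...,g_H) recursively by g_{H+1} = 0 and g_h = f_h − T_h f_{h+1} + P_h g_{h+1}. Then for every (x, a, h), g_h(x,a) ≥ f_h(x,a) − Q_h^{π_f}(x,a), where π_f is the greedy policy of f and Q_h^{π_f} is its Q-function. -/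
/-- `Qaux P R π k h x a` is the `Q`-function of the policy `π` at layer `h`
with `k` steps remaining (so that `Q_h^π = Qaux (H - h) h` when the horizon is
`H`). -/
noncomputable def Qaux {X A : Type*} [Fintype X]
    (P : ℕ → X → A → X → ℝ) (R : ℕ → X → A → ℝ) (π : ℕ → X → A) :
    ℕ → ℕ → X → A → ℝ
  | 0, _, _, _ => 0
  | k + 1, h, x, a =>
      R h x a + ∑ x', P h x a x' * Qaux P R π k (h + 1) x' (π (h + 1) x')

/-- `gaux P R f k h x a` is the reward-free test function defined recursively
by `g_h = f_h − T_h f_{h+1} + P_h g_{h+1}` (with `g` vanishing when no steps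
remain), where `T_h` is the Bellman optimality operator with reward and `P_h`
the zero-reward Bellman operator. -/
noncomputable def gaux {X A : Type*} [Fintype X] [Fintype A] [Nonempty A]
    (P : ℕ → X → A → X → ℝ) (R : ℕ → X → A → ℝ) (f : ℕ → X → A → ℝ) :
    ℕ → ℕ → X → A → ℝ
  | 0, _, _, _ => 0
  | k + 1, h, x, a =>
      f h x a - (R h x a + ∑ x', P h x a x' * (⨆ a' : A, f (h + 1) x' a'))
        + ∑ x', P h x a x' * (⨆ a' : A, gaux P R f k (h + 1) x' a')

/-!
Backward induction on the number of remaining steps. Since `π` is greedy for `f`, at every next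
state `x'` we have `max_{a'} f_{h+1}(x', a') = f_{h+1}(x', π x') ≤ Q_{h+1}^π(x', π x') + g_{h+1}(x', π x')
≤ Q_{h+1}^π(x', π x') + max_{a'} g_{h+1}(x', a')` by the induction hypothesis; averaging over
`x' ∼ P_h(· | x, a)` gives the claim at layer `h`, the reward `R_h` cancelling on both sides.
-/

section

variable {X A : Type*} [Fintype X] [Fintype A] [Nonempty A]
  {P : ℕ → X → A → X → ℝ} {R : ℕ → X → A → ℝ} {f : ℕ → X → A → ℝ} {π : ℕ → X → A}

theorem iSup_le_Qaux_add_iSup_gaux {k h : ℕ}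
    (hgreedy : ∀ x a, f h x a ≤ f h x (π h x))
    (hk : ∀ x a, f h x a - Qaux P R π k h x a ≤ gaux P R f k h x a) (x : X) :
    ⨆ a, f h x a ≤ Qaux P R π k h x (π h x) + ⨆ a, gaux P R f k h x a :=
  calc ⨆ a, f h x a
      ≤ f h x (π h x) := ciSup_le (hgreedy x)
    _ ≤ Qaux P R π k h x (π h x) + gaux P R f k h x (π h x) := by
        linarith [hk x (π h x)]
    _ ≤ Qaux P R π k h x (π h x) + ⨆ a, gaux P R f k h x a := by
        gcongr
        exact le_ciSup (Set.finite_range _).bddAbove _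

theorem sub_Qaux_le_gaux_succ {k h : ℕ} (hP0 : ∀ x a x', 0 ≤ P h x a x')
    (hgreedy : ∀ x a, f (h + 1) x a ≤ f (h + 1) x (π (h + 1) x))
    (hk : ∀ x a, f (h + 1) x a - Qaux P R π k (h + 1) x a ≤ gaux P R f k (h + 1) x a)
    (x : X) (a : A) :
    f h x a - Qaux P R π (k + 1) h x a ≤ gaux P R f (k + 1) h x a := by
  have hnext :
      ∑ x', P h x a x' * ⨆ a', f (h + 1) x' a'
        ≤ ∑ x', P h x a x' * Qaux P R π k (h + 1) x' (π (h + 1) x')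
          + ∑ x', P h x a x' * ⨆ a', gaux P R f k (h + 1) x' a' :=
    calc ∑ x', P h x a x' * ⨆ a', f (h + 1) x' a'
        ≤ ∑ x', P h x a x' * (Qaux P R π k (h + 1) x' (π (h + 1) x')
            + ⨆ a', gaux P R f k (h + 1) x' a') := by
          gcongr with x' _
          · exact hP0 x a x'
          · exact iSup_le_Qaux_add_iSup_gaux hgreedy hk x'
      _ = _ := by simp only [mul_add, Finset.sum_add_distrib]
  simp only [Qaux, gaux]
  linarith

theorem sub_Qaux_le_gaux (hP0 : ∀ h x a x', 0 ≤ P h x a x')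
    (hgreedy : ∀ h x a, f h x a ≤ f h x (π h x)) :
    ∀ k h, (∀ x a, f (h + k) x a = 0) →
      ∀ x a, f h x a - Qaux P R π k h x a ≤ gaux P R f k h x a
  | 0, h, hf, x, a => by simpa [Qaux, gaux] using (hf x a).le
  | k + 1, h, hf, x, a =>
    sub_Qaux_le_gaux_succ (hP0 h) (hgreedy (h + 1))
      (sub_Qaux_le_gaux hP0 hgreedy k (h + 1) fun x a => by
        rw [add_right_comm]; exact hf x a) x a

end

theorem reward_free_overestimates_regret_general
    {X A : Type*} [Fintype X] [Fintype A] [Nonempty A]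
    (H : ℕ) (P : ℕ → X → A → X → ℝ) (R : ℕ → X → A → ℝ)
    (hP0 : ∀ h x a x', 0 ≤ P h x a x')
    (f : ℕ → X → A → ℝ) (hfH : ∀ x a, f H x a = 0)
    (π : ℕ → X → A) (hgreedy : ∀ h x a, f h x a ≤ f h x (π h x)) :
    ∀ h x a, h ≤ H →
      f h x a - Qaux P R π (H - h) h x a ≤ gaux P R f (H - h) h x a := by
  intro h x a hh
  refine sub_Qaux_le_gaux hP0 hgreedy (H - h) h (fun x a => ?_) x a
  rw [Nat.add_sub_cancel' hh]
  exact hfH x a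

/-- Reward-free test function overestimates regret:
`g_h(x,a) ≥ f_h(x,a) − Q_h^{π_f}(x,a)` for all `(x,a,h)` with `h ≤ H`. -/
theorem reward_free_overestimates_regret
    {X A : Type*} [Fintype X] [Fintype A] [Nonempty A]
    (H : ℕ) (P : ℕ → X → A → X → ℝ) (R : ℕ → X → A → ℝ)
    (hP0 : ∀ h x a x', 0 ≤ P h x a x') (hP1 : ∀ h x a, ∑ x', P h x a x' = 1)
    (f : ℕ → X → A → ℝ) (hfH : ∀ x a, f H x a = 0)
    (π : ℕ → X → A) (hgreedy : ∀ h x a, f h x a ≤ f h x (π h x)) :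
    ∀ h x a, h ≤ H →
      f h x a - Qaux P R π (H - h) h x a ≤ gaux P R f (H - h) h x a :=
  reward_free_overestimates_regret_general H P R hP0 f hfH π hgreedy
end

section
/- (Suboptimality bound under generalized concentrability.) Consider a finite-horizon MDP with horizon H and total reward in [0,1]. Let f = (f_1,...,f_H) be a value function (f_{H+1} = 0) with greedy policy π_f, and let Π be a policy class containing both π* and π_f. Then J(π*) − J(π_f) ≤ 2·max_{π ∈ Π} sum_{h=1}^H E_{(x,a) ∼ d_h^π}[ |f_h(x,a) − (T_h f_{h+1})(x,a)| ] ≤ 2·sqrt( H · max_{π ∈ Π} sum_{h=1}^H E_{(x,a) ∼ d_h^π}[ (f_h(x,a) − (T_h f_{h+1})(x,a))² ] ). -/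
/-!
Telescoping the value estimates `f_h(x, π_h x)` along the occupancy measures of a policy `π`
writes `f_1(x₁, π_1 x₁) - J(π)` as the on-policy sum of the Bellman residuals of `f`, except that
the next-layer value is `f_{h+1}(x', π_{h+1} x')` instead of `max_{a'} f_{h+1}(x', a')`. For the
greedy policy `π_f` the two agree, and for any other policy the replacement only lowers the
residual. Since also `f_1(x₁, π*_1 x₁) ≤ f_1(x₁, π_{f,1} x₁)`, the gap `J(π*) - J(π_f)` is at most
the sum of the residual mass under `π*` and under `π_f`. The second inequality is Jensen in each
layer (the occupancy measures are probability distributions) followed by Cauchy–Schwarz over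
the `H` layers.
-/

/-- State occupancy of a deterministic policy `π` at each layer. -/
noncomputable def occPol {X A : Type*} [Fintype X] [DecidableEq X]
    (P : ℕ → X → A → X → ℝ) (x₁ : X) (π : ℕ → X → A) : ℕ → X → ℝ
  | 0 => fun x => if x = x₁ then 1 else 0
  | h + 1 => fun x' => ∑ x, occPol P x₁ π h x * P h x (π h x) x'

/-- Expected total reward of a deterministic policy `π` over horizon `H`. -/
noncomputable def Jval {X A : Type*} [Fintype X] [DecidableEq X]
    (P : ℕ → X → A → X → ℝ) (R : ℕ → X → A → ℝ) (x₁ : X) (H : ℕ)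
    (π : ℕ → X → A) : ℝ :=
  ∑ h ∈ Finset.range H, ∑ x, occPol P x₁ π h x * R h x (π h x)

open Finset

section Occupancy

variable {X A : Type*} [Fintype X] [DecidableEq X] {P : ℕ → X → A → X → ℝ} {x₁ : X}
  {π : ℕ → X → A}

theorem occPol_nonneg (hP0 : ∀ h x a x', 0 ≤ P h x a x') (h : ℕ) (x : X) :
    0 ≤ occPol P x₁ π h x := by
  induction h generalizing x with
  | zero => unfold occPol; split_ifs <;> norm_num
  | succ h ih => exact sum_nonneg fun y _ => mul_nonneg (ih y) (hP0 _ _ _ _)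

theorem sum_occPol_zero_mul (g : X → ℝ) : ∑ x, occPol P x₁ π 0 x * g x = g x₁ := by
  simp [occPol]

theorem sum_occPol_succ_mul (h : ℕ) (g : X → ℝ) :
    ∑ x', occPol P x₁ π (h + 1) x' * g x' =
      ∑ x, occPol P x₁ π h x * ∑ x', P h x (π h x) x' * g x' := by
  simp only [occPol, sum_mul, mul_sum, mul_assoc]
  exact sum_comm

theorem sum_occPol_eq_one (hP1 : ∀ h x a, ∑ x', P h x a x' = 1) (h : ℕ) :
    ∑ x, occPol P x₁ π h x = 1 := by
  induction h with
  | zero => simpa using sum_occPol_zero_mul (P := P) (x₁ := x₁) (π := π) fun _ => 1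
  | succ h ih =>
    simpa [hP1, ih] using sum_occPol_succ_mul (P := P) (x₁ := x₁) (π := π) h fun _ => 1

end Occupancy

section OnPolicy

variable {X A : Type*} [Fintype X] [DecidableEq X] {P : ℕ → X → A → X → ℝ} {x₁ : X}
  {H : ℕ} {π : ℕ → X → A}

noncomputable def occSum (P : ℕ → X → A → X → ℝ) (x₁ : X) (H : ℕ) (π : ℕ → X → A)
    (g : ℕ → X → ℝ) : ℝ :=
  ∑ h ∈ range H, ∑ x, occPol P x₁ π h x * g h x

theorem occSum_mono (hP0 : ∀ h x a x', 0 ≤ P h x a x') {g g' : ℕ → X → ℝ}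
    (hg : ∀ h x, g h x ≤ g' h x) : occSum P x₁ H π g ≤ occSum P x₁ H π g' :=
  sum_le_sum fun h _ => sum_le_sum fun x _ =>
    mul_le_mul_of_nonneg_left (hg h x) (occPol_nonneg hP0 h x)

theorem abs_occSum_le (hP0 : ∀ h x a x', 0 ≤ P h x a x') (g : ℕ → X → ℝ) :
    |occSum P x₁ H π g| ≤ occSum P x₁ H π fun h x => |g h x| := by
  refine (abs_sum_le_sum_abs _ _).trans <| sum_le_sum fun h _ =>
    (abs_sum_le_sum_abs _ _).trans_eq <| sum_congr rfl fun x _ => ?_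
  rw [abs_mul, abs_of_nonneg (occPol_nonneg hP0 h x)]

theorem occSum_abs_le_sqrt (hP0 : ∀ h x a x', 0 ≤ P h x a x')
    (hP1 : ∀ h x a, ∑ x', P h x a x' = 1) (g : ℕ → X → ℝ) :
    occSum P x₁ H π (fun h x => |g h x|) ≤
      √(H * occSum P x₁ H π fun h x => g h x ^ 2) := by
  have jensen (h : ℕ) :
      (∑ x, occPol P x₁ π h x * |g h x|) ^ 2 ≤ ∑ x, occPol P x₁ π h x * g h x ^ 2 := by
    simpa only [smul_eq_mul, sq_abs] using (even_two.convexOn_pow (𝕜 := ℝ)).map_sum_le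
      (fun x _ => occPol_nonneg hP0 h x) (sum_occPol_eq_one hP1 h)
      fun x _ => Set.mem_univ (|g h x|)
  refine (le_abs_self _).trans <| Real.abs_le_sqrt ?_
  calc occSum P x₁ H π (fun h x => |g h x|) ^ 2
      ≤ #(range H) * ∑ h ∈ range H, (∑ x, occPol P x₁ π h x * |g h x|) ^ 2 :=
        sq_sum_le_card_mul_sum_sq
    _ ≤ H * occSum P x₁ H π fun h x => g h x ^ 2 := by
        rw [card_range]
        exact mul_le_mul_of_nonneg_left (sum_le_sum fun h _ => jensen h) H.cast_nonneg

theorem sub_Jval_eq_occSum (R : ℕ → X → A → ℝ) {V : ℕ → X → ℝ} (hVH : ∀ x, V H x = 0) :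
    V 0 x₁ - Jval P R x₁ H π =
      occSum P x₁ H π fun h x =>
        V h x - (R h x (π h x) + ∑ x', P h x (π h x) x' * V (h + 1) x') := by
  set E : ℕ → ℝ := fun h => ∑ x, occPol P x₁ π h x * V h x
  have hE0 : E 0 = V 0 x₁ := sum_occPol_zero_mul _
  have hEH : E H = 0 := by simp [E, hVH]
  calc V 0 x₁ - Jval P R x₁ H π
        = ∑ h ∈ range H, (E h - E (h + 1)) - Jval P R x₁ H π := by
        rw [sum_range_sub', hE0, hEH, sub_zero]
    _ = _ := by
        rw [Jval, occSum, ← sum_sub_distrib]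
        refine sum_congr rfl fun h _ => ?_
        simp only [E, sum_occPol_succ_mul, ← sum_sub_distrib]
        refine sum_congr rfl fun x _ => ?_
        ring

end OnPolicy

theorem ciSup_eq_of_forall_le_apply {ι α : Type*} [ConditionallyCompleteLattice α]
    {f : ι → α} {i₀ : ι} (h : ∀ i, f i ≤ f i₀) : ⨆ i, f i = f i₀ :=
  have : Nonempty ι := ⟨i₀⟩
  (IsGreatest.isLUB ⟨Set.mem_range_self i₀, Set.forall_mem_range.2 h⟩).ciSup_eq

section Bellman

variable {X A : Type*} [Fintype X] [DecidableEq X] {P : ℕ → X → A → X → ℝ}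
  {R : ℕ → X → A → ℝ} {x₁ : X} {H : ℕ} {f : ℕ → X → A → ℝ}

/-- `(f_h - T_h f_{h+1})(x, π_h x)`. -/
noncomputable def bellmanResidual (P : ℕ → X → A → X → ℝ) (R : ℕ → X → A → ℝ)
    (f : ℕ → X → A → ℝ) (π : ℕ → X → A) (h : ℕ) (x : X) : ℝ :=
  f h x (π h x) - (R h x (π h x) + ∑ x', P h x (π h x) x' * ⨆ a', f (h + 1) x' a')

theorem occSum_bellmanResidual_le (hP0 : ∀ h x a x', 0 ≤ P h x a x')
    (hbdd : ∀ h x, BddAbove (Set.range (f h x))) (hfH : ∀ x a, f H x a = 0)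
    (π : ℕ → X → A) :
    occSum P x₁ H π (bellmanResidual P R f π) ≤ f 0 x₁ (π 0 x₁) - Jval P R x₁ H π := by
  rw [sub_Jval_eq_occSum (V := fun h x => f h x (π h x)) R fun x => hfH x _]
  refine occSum_mono hP0 fun h x => ?_
  have : ∑ x', P h x (π h x) x' * f (h + 1) x' (π (h + 1) x') ≤
      ∑ x', P h x (π h x) x' * ⨆ a', f (h + 1) x' a' :=
    sum_le_sum fun x' _ => mul_le_mul_of_nonneg_left (le_ciSup (hbdd _ _) _) (hP0 _ _ _ _)
  simp only [bellmanResidual]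
  linarith

theorem occSum_bellmanResidual_of_greedy {πf : ℕ → X → A} (hfH : ∀ x a, f H x a = 0)
    (hgreedy : ∀ h x a, f h x a ≤ f h x (πf h x)) :
    occSum P x₁ H πf (bellmanResidual P R f πf) =
      f 0 x₁ (πf 0 x₁) - Jval P R x₁ H πf := by
  rw [sub_Jval_eq_occSum (V := fun h x => f h x (πf h x)) R fun x => hfH x _]
  congr 1
  ext h x
  simp only [bellmanResidual, ciSup_eq_of_forall_le_apply (hgreedy _ _)]

theorem Jval_sub_Jval_greedy_le (hP0 : ∀ h x a x', 0 ≤ P h x a x')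
    (hfH : ∀ x a, f H x a = 0) {πf : ℕ → X → A} (hgreedy : ∀ h x a, f h x a ≤ f h x (πf h x))
    (π : ℕ → X → A) :
    Jval P R x₁ H π - Jval P R x₁ H πf ≤
      (occSum P x₁ H π fun h x => |bellmanResidual P R f π h x|) +
        occSum P x₁ H πf fun h x => |bellmanResidual P R f πf h x| := by
  have hbdd h x : BddAbove (Set.range (f h x)) :=
    ⟨f h x (πf h x), Set.forall_mem_range.2 (hgreedy h x)⟩
  have hπ := occSum_bellmanResidual_le (R := R) (x₁ := x₁) hP0 hbdd hfH π
  have hπf := occSum_bellmanResidual_of_greedy (P := P) (R := R) (x₁ := x₁) hfH hgreedy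
  calc Jval P R x₁ H π - Jval P R x₁ H πf
      ≤ -occSum P x₁ H π (bellmanResidual P R f π) +
          occSum P x₁ H πf (bellmanResidual P R f πf) := by
        linarith [hgreedy 0 x₁ (π 0 x₁)]
    _ ≤ _ := add_le_add ((neg_le_abs _).trans (abs_occSum_le hP0 _))
        ((le_abs_self _).trans (abs_occSum_le hP0 _))

end Bellman

theorem suboptimality_generalized_concentrability_general
    {X A : Type*} [Fintype X] [DecidableEq X]
    (H : ℕ) (P : ℕ → X → A → X → ℝ) (R : ℕ → X → A → ℝ) (x₁ : X)
    (hP0 : ∀ h x a x', 0 ≤ P h x a x') (hP1 : ∀ h x a, ∑ x', P h x a x' = 1)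
    (f : ℕ → X → A → ℝ) (hfH : ∀ x a, f H x a = 0)
    (πf : ℕ → X → A) (hgreedy : ∀ h x a, f h x a ≤ f h x (πf h x))
    (πstar : ℕ → X → A)
    (Pols : Finset (ℕ → X → A)) (hstar : πstar ∈ Pols) (hf : πf ∈ Pols) :
    (Jval P R x₁ H πstar - Jval P R x₁ H πf
        ≤ 2 * Pols.sup' ⟨πstar, hstar⟩ (fun π =>
            ∑ h ∈ Finset.range H, ∑ x, occPol P x₁ π h x *
              |f h x (π h x)
                - (R h x (π h x)
                    + ∑ x', P h x (π h x) x' * (⨆ a' : A, f (h + 1) x' a'))|))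
    ∧ 2 * Pols.sup' ⟨πstar, hstar⟩ (fun π =>
          ∑ h ∈ Finset.range H, ∑ x, occPol P x₁ π h x *
            |f h x (π h x)
              - (R h x (π h x)
                  + ∑ x', P h x (π h x) x' * (⨆ a' : A, f (h + 1) x' a'))|)
        ≤ 2 * Real.sqrt (H * Pols.sup' ⟨πstar, hstar⟩ (fun π =>
            ∑ h ∈ Finset.range H, ∑ x, occPol P x₁ π h x *
              (f h x (π h x)
                - (R h x (π h x)
                    + ∑ x', P h x (π h x) x' * (⨆ a' : A, f (h + 1) x' a'))) ^ 2)) := by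
  set L := fun π => occSum P x₁ H π fun h x => |bellmanResidual P R f π h x|
  set Q := fun π => occSum P x₁ H π fun h x => bellmanResidual P R f π h x ^ 2
  change Jval P R x₁ H πstar - Jval P R x₁ H πf ≤ 2 * Pols.sup' _ L ∧
    2 * Pols.sup' _ L ≤ 2 * √(H * Pols.sup' _ Q)
  constructor
  · calc Jval P R x₁ H πstar - Jval P R x₁ H πf ≤ L πstar + L πf :=
          Jval_sub_Jval_greedy_le hP0 hfH hgreedy πstar
      _ ≤ 2 * Pols.sup' _ L := by
          rw [two_mul]
          exact add_le_add (le_sup' L hstar) (le_sup' L hf)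
  · refine mul_le_mul_of_nonneg_left (sup'_le _ _ fun π hπ => ?_) zero_le_two
    calc L π ≤ √(H * Q π) := occSum_abs_le_sqrt hP0 hP1 _
      _ ≤ √(H * Pols.sup' _ Q) := by gcongr; exact le_sup' Q hπ

/-- Suboptimality bound under generalized concentrability:
`J(π*) − J(π_f)` is at most twice the maximal (over the policy class) total
absolute Bellman residual of `f` on-policy, which in turn is bounded via
Cauchy–Schwarz by the square root of `H` times the maximal total squared
Bellman residual. -/
theorem suboptimality_generalized_concentrability
    {X A : Type*} [Fintype X] [Fintype A] [Nonempty A] [DecidableEq X]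
    (H : ℕ) (P : ℕ → X → A → X → ℝ) (R : ℕ → X → A → ℝ) (x₁ : X)
    (hP0 : ∀ h x a x', 0 ≤ P h x a x') (hP1 : ∀ h x a, ∑ x', P h x a x' = 1)
    (hR : ∀ h x a, 0 ≤ R h x a ∧ R h x a ≤ 1)
    (f : ℕ → X → A → ℝ) (hfH : ∀ x a, f H x a = 0)
    (πf : ℕ → X → A) (hgreedy : ∀ h x a, f h x a ≤ f h x (πf h x))
    (πstar : ℕ → X → A)
    (hopt : ∀ π : ℕ → X → A, Jval P R x₁ H π ≤ Jval P R x₁ H πstar)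
    (Pols : Finset (ℕ → X → A)) (hstar : πstar ∈ Pols) (hf : πf ∈ Pols) :
    (Jval P R x₁ H πstar - Jval P R x₁ H πf
        ≤ 2 * Pols.sup' ⟨πstar, hstar⟩ (fun π =>
            ∑ h ∈ Finset.range H, ∑ x, occPol P x₁ π h x *
              |f h x (π h x)
                - (R h x (π h x)
                    + ∑ x', P h x (π h x) x' * (⨆ a' : A, f (h + 1) x' a'))|))
    ∧ 2 * Pols.sup' ⟨πstar, hstar⟩ (fun π =>
          ∑ h ∈ Finset.range H, ∑ x, occPol P x₁ π h x *
            |f h x (π h x)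
              - (R h x (π h x)
                  + ∑ x', P h x (π h x) x' * (⨆ a' : A, f (h + 1) x' a'))|)
        ≤ 2 * Real.sqrt (H * Pols.sup' ⟨πstar, hstar⟩ (fun π =>
            ∑ h ∈ Finset.range H, ∑ x, occPol P x₁ π h x *
              (f h x (π h x)
                - (R h x (π h x)
                    + ∑ x', P h x (π h x) x' * (⨆ a' : A, f (h + 1) x' a'))) ^ 2)) :=
  suboptimality_generalized_concentrability_general H P R x₁ hP0 hP1 f hfH πf hgreedy πstar Pols
    hstar hf
end
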